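/- arXiv:2306.15206 — 3 statements merged into one kernel-verified Lean document; each statement's English description precedes it below -/
import Mathlib

section
/- Let G ∈ {C5, bull, gem, co-gem} and let (A,B) be a vertex partition of G with |A| < |B|, and let H = G ⊕ P for some subset P of {(A,A),(B,B)} (the graph obtained by flipping each pair in P). If H has at least two isolated vertices, then G is the co-gem, and either A consists of the isolated vertex and one of the degree-1 vertices with P = {(B,B)}, or A consists of one of the degree-1 vertices and its neighbor with P = {(A,A)}. Moreover, in these cases H has exactly two isolated vertices. -/
open SimpleGraph Set

namespace FlipWidth

variable {V : Type*}

/-- The flip of a graph `G` by a pair `(A, B)` of vertex sets. -/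
def flip (G : SimpleGraph V) (A B : Set V) : SimpleGraph V where
  Adj u v := u ≠ v ∧ Xor' ((u ∈ A ∧ v ∈ B) ∨ (u ∈ B ∧ v ∈ A)) (G.Adj u v)
  symm := by
    constructor
    intro u v ⟨h, hx⟩
    refine ⟨h.symm, ?_⟩
    have := G.adj_comm u v
    unfold Xor' Xor at *
    tauto
  loopless := by constructor; intro v h; exact h.1 rfl

/-- Whether a pair of vertex sets "crosses" the (unordered) pair of vertices `u, v`. -/
def crossPair (p : Set V × Set V) (u v : V) : Prop :=
  (u ∈ p.1 ∧ v ∈ p.2) ∨ (u ∈ p.2 ∧ v ∈ p.1)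

/-- The graph obtained from `G` by flipping every pair in `P` (order irrelevant
since flips commute: adjacency is toggled according to the parity of the number
of pairs in `P` crossing the two vertices). -/
def flips (G : SimpleGraph V) (P : Set (Set V × Set V)) : SimpleGraph V where
  Adj u v := u ≠ v ∧ Xor' (Odd {p ∈ P | crossPair p u v}.ncard) (G.Adj u v)
  symm := by
    constructor
    intro u v ⟨h, hx⟩
    refine ⟨h.symm, ?_⟩
    have hset : {p ∈ P | crossPair p v u} = {p ∈ P | crossPair p u v} := by
      ext p; unfold crossPair; constructor <;> (intro ⟨h1, h2⟩; exact ⟨h1, by tauto⟩)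
    rw [hset]
    have := G.adj_comm u v
    unfold Xor' Xor at *
    tauto
  loopless := by constructor; intro v h; exact h.1 rfl

/-- `A` is complete to `B` in `G`. -/
def Complete (G : SimpleGraph V) (A B : Set V) : Prop :=
  ∀ a ∈ A, ∀ b ∈ B, G.Adj a b

/-- `A` is anti-complete to `B` in `G`. -/
def Anticomplete (G : SimpleGraph V) (A B : Set V) : Prop :=
  ∀ a ∈ A, ∀ b ∈ B, ¬ G.Adj a b

/-- `(V1, V2)` is a bi-join in `G`. -/
def IsBiJoin (G : SimpleGraph V) (V1 V2 : Set V) : Prop :=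
  ∃ W1 W2 : Set V, W1 ⊆ V1 ∧ W2 ⊆ V2 ∧
    Complete G W1 W2 ∧ Anticomplete G W1 (V2 \ W2) ∧
    Complete G (V1 \ W1) (V2 \ W2) ∧ Anticomplete G (V1 \ W1) W2

/-- `(W1, V1\W1, W2, V2\W2)` is a bi-join partition of `(V1, V2)`. -/
def IsBiJoinPartition (G : SimpleGraph V) (V1 V2 W1 W2 : Set V) : Prop :=
  W1 ⊆ V1 ∧ W2 ⊆ V2 ∧
    Complete G W1 W2 ∧ Anticomplete G W1 (V2 \ W2) ∧
    Complete G (V1 \ W1) (V2 \ W2) ∧ Anticomplete G (V1 \ W1) W2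

/-- Degree of a vertex, as the cardinality of its neighborhood. -/
noncomputable def ndeg (G : SimpleGraph V) (v : V) : ℕ := (G.neighborSet v).ncard

/-- `u` and `v` lie in two distinct sets among `A`, `B`, `C`. -/
def crossParts (A B C : Set V) (u v : V) : Prop :=
  (u ∈ A ∧ v ∈ B) ∨ (u ∈ B ∧ v ∈ A) ∨ (u ∈ A ∧ v ∈ C) ∨ (u ∈ C ∧ v ∈ A) ∨
    (u ∈ B ∧ v ∈ C) ∨ (u ∈ C ∧ v ∈ B)

/-- The cycle on 5 vertices. -/
def C5 : SimpleGraph (Fin 5) := SimpleGraph.fromRel (fun u v => v = u + 1)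

/-- The bull: a triangle `0,1,2` with pendant vertices `3` (at `0`) and `4` (at `1`). -/
def bull : SimpleGraph (Fin 5) :=
  SimpleGraph.fromRel (fun u v =>
    (u, v) ∈ ([(0,1),(1,2),(0,2),(0,3),(1,4)] : List (Fin 5 × Fin 5)))

/-- The gem: the path `0-1-2-3` plus a dominating vertex `4`. -/
def gem : SimpleGraph (Fin 5) :=
  SimpleGraph.fromRel (fun u v =>
    (u, v) ∈ ([(0,1),(1,2),(2,3),(4,0),(4,1),(4,2),(4,3)] : List (Fin 5 × Fin 5)))

/-- The co-gem: the path `0-1-2-3` plus an isolated vertex `4`. -/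
def cogem : SimpleGraph (Fin 5) :=
  SimpleGraph.fromRel (fun u v =>
    (u, v) ∈ ([(0,1),(1,2),(2,3)] : List (Fin 5 × Fin 5)))

/-- The four obstruction graphs. -/
def Fobs : Set (SimpleGraph (Fin 5)) := {C5, bull, gem, cogem}

end FlipWidth

/-!
Once `B = Aᶜ` is used and `P` is split into the four subsets of `{(A, A), (B, B)}`, the graph
`G ⊕ P` is an iterated `flip`. What remains is a finite statement about the 32 subsets `A` of
`Fin 5`, checked by `decide` for each of the four obstructions.
-/

open scoped Finset

namespace FlipWidth

variable {V : Type*}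

section Flips

variable {G : SimpleGraph V} {P : Set (Set V × Set V)} {p q : Set V × Set V}

@[simp]
theorem flips_empty (G : SimpleGraph V) : flips G ∅ = G := by
  ext u v
  change u ≠ v ∧ Xor _ _ ↔ _
  simpa using G.ne_of_adj

theorem odd_ncard_sep_crossPair_insert_iff (hP : P.Finite) (hp : p ∉ P) (u v : V) :
    Odd {q ∈ insert p P | crossPair q u v}.ncard ↔
      Xor (crossPair p u v) (Odd {q ∈ P | crossPair q u v}.ncard) := by
  by_cases hc : crossPair p u v
  · have : {q ∈ insert p P | crossPair q u v} = insert p {q ∈ P | crossPair q u v} := by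
      ext q; by_cases hq : q = p <;> simp_all
    rw [this, Set.ncard_insert_of_notMem (fun h => hp h.1) (hP.subset fun _ h => h.1),
      Nat.odd_add_one]
    simp [hc, Nat.not_odd_iff_even]
  · have : {q ∈ insert p P | crossPair q u v} = {q ∈ P | crossPair q u v} := by
      ext q; by_cases hq : q = p <;> simp_all
    rw [this]
    simp [hc]

theorem flips_insert (hP : P.Finite) (hp : p ∉ P) :
    flips G (insert p P) = flip (flips G P) p.1 p.2 := by
  ext u v
  change u ≠ v ∧ Xor _ _ ↔ u ≠ v ∧ Xor (crossPair p u v) (u ≠ v ∧ Xor _ _)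
  rw [odd_ncard_sep_crossPair_insert_iff hP hp]
  grind

@[simp]
theorem flips_singleton (G : SimpleGraph V) (p : Set V × Set V) :
    flips G {p} = flip G p.1 p.2 := by
  rw [← insert_empty_eq, flips_insert Set.finite_empty (Set.notMem_empty p), flips_empty]

theorem flips_pair (hpq : p ≠ q) :
    flips G {p, q} = flip (flip G q.1 q.2) p.1 p.2 := by
  rw [flips_insert (Set.finite_singleton q) hpq, flips_singleton]

end Flips

theorem ncard_setOf_neighborSet_eq_empty [Fintype V] (G : SimpleGraph V)
    [DecidablePred G.IsIsolated] :
    {v | G.neighborSet v = ∅}.ncard = #{v | G.IsIsolated v} := by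
  simp only [neighborSet_eq_empty]
  rw [← Set.ncard_coe_finset, Finset.coe_filter_univ]

theorem ndeg_eq_degree (G : SimpleGraph V) (v : V) [Fintype (G.neighborSet v)] :
    ndeg G v = G.degree v := by
  rw [ndeg, ← card_neighborFinset_eq_degree, ← Set.ncard_coe_finset, coe_neighborFinset]

instance [DecidableEq V] {G : SimpleGraph V} [DecidableRel G.Adj] {A B : Set V}
    [DecidablePred (· ∈ A)] [DecidablePred (· ∈ B)] : DecidableRel (flip G A B).Adj :=
  fun u v => inferInstanceAs (Decidable (u ≠ v ∧ Xor _ _))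

instance [Fintype V] {G : SimpleGraph V} [DecidableRel G.Adj] : DecidablePred G.IsIsolated :=
  fun v => inferInstanceAs (Decidable (∀ w, ¬ G.Adj v w))

instance : DecidableRel C5.Adj := by unfold C5; infer_instance
instance : DecidableRel bull.Adj := by unfold bull; infer_instance
instance : DecidableRel gem.Adj := by unfold gem; infer_instance
instance : DecidableRel cogem.Adj := by unfold cogem; infer_instance

/-- The theorem for a fixed `G`, with `A = s`, `B = sᶜ` and the cases `P = ∅`, `{(A, A)}`,
`{(B, B)}`, `{(A, A), (B, B)}` in turn; `G = cogem` is stated edgewise to make it decidable. -/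
def SideFlipClassification (G : SimpleGraph (Fin 5)) [DecidableRel G.Adj] : Prop :=
  ∀ s : Finset (Fin 5), #s < #sᶜ →
    #{v | G.IsIsolated v} < 2 ∧
    (2 ≤ #{v | (flip G s s).IsIsolated v} →
      (∀ u v, G.Adj u v ↔ cogem.Adj u v) ∧
      (∃ x y, G.degree x = 1 ∧ G.Adj x y ∧ s = {x, y}) ∧
      #{v | (flip G s s).IsIsolated v} = 2) ∧
    (2 ≤ #{v | (flip G ↑sᶜ ↑sᶜ).IsIsolated v} →
      (∀ u v, G.Adj u v ↔ cogem.Adj u v) ∧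
      (∃ w x, G.degree w = 0 ∧ G.degree x = 1 ∧ s = {w, x}) ∧
      #{v | (flip G ↑sᶜ ↑sᶜ).IsIsolated v} = 2) ∧
    #{v | (flip (flip G ↑sᶜ ↑sᶜ) s s).IsIsolated v} < 2

theorem sideFlipClassification_C5 : SideFlipClassification C5 := by
  unfold SideFlipClassification; decide

theorem sideFlipClassification_bull : SideFlipClassification bull := by
  unfold SideFlipClassification; decide

theorem sideFlipClassification_gem : SideFlipClassification gem := by
  unfold SideFlipClassification; decide

theorem sideFlipClassification_cogem : SideFlipClassification cogem := by
  unfold SideFlipClassification; decide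

theorem sideFlipClassification_of_mem_Fobs {G : SimpleGraph (Fin 5)} [DecidableRel G.Adj]
    (hG : G ∈ Fobs) : SideFlipClassification G := by
  simp only [Fobs, Set.mem_insert_iff, Set.mem_singleton_iff] at hG
  rcases hG with rfl | rfl | rfl | rfl
  · convert sideFlipClassification_C5
  · convert sideFlipClassification_bull
  · convert sideFlipClassification_gem
  · convert sideFlipClassification_cogem

end FlipWidth

open FlipWidth in
/-- If `G ∈ {C5, bull, gem, cogem}`, `(A,B)` is a vertex partition of `G` with
`|A| < |B|`, `P ⊆ {(A,A),(B,B)}` and `H = G ⊕ P` has at least two isolated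
vertices, then `G` is the co-gem and either `A` consists of the isolated vertex
and a degree-1 vertex with `P = {(B,B)}`, or `A` consists of a degree-1 vertex
and its neighbor with `P = {(A,A)}`; moreover `H` has exactly two isolated
vertices. -/
theorem two_isolated_no_cross_flip :
    ∀ G ∈ Fobs, ∀ A B : Set (Fin 5), Disjoint A B → A ∪ B = Set.univ →
      A.ncard < B.ncard →
      ∀ P : Set (Set (Fin 5) × Set (Fin 5)), P ⊆ {(A, A), (B, B)} →
      2 ≤ {v | (flips G P).neighborSet v = ∅}.ncard →
      G = cogem ∧
        ((∃ w x : Fin 5, ndeg G w = 0 ∧ ndeg G x = 1 ∧ A = {w, x} ∧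
            P = {(B, B)}) ∨
          (∃ x y : Fin 5, ndeg G x = 1 ∧ G.Adj x y ∧ A = {x, y} ∧
            P = {(A, A)})) ∧
        {v | (flips G P).neighborSet v = ∅}.ncard = 2 := by
  classical
  intro G hG A B hAB hABu hcard P hP hiso
  obtain rfl : B = Aᶜ := (IsCompl.compl_eq ⟨hAB, codisjoint_iff.2 hABu⟩).symm
  lift A to Finset (Fin 5) using A.toFinite
  rw [← Finset.coe_compl] at hcard hP ⊢
  rw [Set.ncard_coe_finset, Set.ncard_coe_finset] at hcard
  have hne : ((A : Set (Fin 5)), (A : Set (Fin 5))) ≠ (↑Aᶜ, ↑Aᶜ) := fun h =>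
    hcard.ne (congrArg Finset.card (Finset.coe_injective (Prod.mk.inj h).1))
  have hcogem (h : ∀ u v, G.Adj u v ↔ cogem.Adj u v) : G = cogem := by ext; apply h
  obtain ⟨hnone, hsmall, hlarge, hboth⟩ := sideFlipClassification_of_mem_Fobs hG A hcard
  rcases Set.subset_pair_iff_eq.1 hP with rfl | rfl | rfl | rfl <;>
    simp only [flips_empty, flips_singleton, flips_pair hne,
      ncard_setOf_neighborSet_eq_empty] at hiso ⊢
  · exact absurd hiso hnone.not_ge
  · obtain ⟨hG, ⟨x, y, hx, hxy, rfl⟩, htwo⟩ := hsmall hiso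
    exact ⟨hcogem hG, .inr ⟨x, y, by rw [ndeg_eq_degree, hx], hxy, Finset.coe_pair, trivial⟩,
      htwo⟩
  · obtain ⟨hG, ⟨w, x, hw, hx, rfl⟩, htwo⟩ := hlarge hiso
    exact ⟨hcogem hG, .inl ⟨w, x, by rw [ndeg_eq_degree, hw], by rw [ndeg_eq_degree, hx],
      Finset.coe_pair, trivial⟩, htwo⟩
  · exact absurd hiso hboth.not_ge
end

section
/- Let G be a graph and let (A,B,C) be a triple of bi-joins of G (i.e., a partition of V(G) into three parts such that each of (A, B∪C), (B, A∪C), (C, A∪B) is a bi-join). Then there exist sets X, Y ⊆ V(G) and a collection S of pairs from {(X,X),(Y,Y),(X,Y)} such that in G ⊕ S there are no edges between any two distinct sets among A, B, and C. (In other words, G admits a 2-flip removing all edges between distinct parts of the triple.) -/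
/-!
A bi-join `(V₁, V₂)` amounts to a two-colouring `f` of `V₁ ∪ V₂` such that a vertex of `V₁` and
a vertex of `V₂` are adjacent iff they get the same colour. The three bi-joins give colourings
`fA`, `fB`, `fC`. Two of them, say `fA` and `fB`, describe the same edges between `A` and `B`, so
they agree on `A ∪ B` up to swapping the two colours. Hence the sum `fA + fB + fC` (mod 2)
describes every edge between two distinct parts, up to one global complement. A single 2-flip
along this colouring therefore removes all of them: flip `(X, X)` and `(Y, Y)`, or `(X, Y)`,
where `X` and `Y` are the two colour classes.
-/

open SimpleGraph Set

namespace Set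

variable {α : Type*} {Q : α → Prop}

theorem odd_ncard_sep_singleton_iff (q : α) : Odd {p ∈ ({q} : Set α) | Q p}.ncard ↔ Q q := by
  by_cases hq : Q q
  · have : {p ∈ ({q} : Set α) | Q p} = {q} := by ext; simp +contextual [hq]
    rw [this, ncard_singleton]
    simp [hq]
  · have : {p ∈ ({q} : Set α) | Q p} = ∅ := by ext; simp +contextual [hq]
    rw [this, ncard_empty]
    simp [hq]

theorem odd_ncard_sep_pair_iff {p₁ p₂ : α} (h : ¬(Q p₁ ∧ Q p₂)) :
    Odd {p ∈ ({p₁, p₂} : Set α) | Q p}.ncard ↔ Q p₁ ∨ Q p₂ := by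
  by_cases h₁ : Q p₁
  · have : {p ∈ ({p₁, p₂} : Set α) | Q p} = {p₁} := by
      ext p; constructor
      · rintro ⟨rfl | rfl, hp⟩ <;> tauto
      · rintro rfl; exact ⟨.inl rfl, h₁⟩
    rw [this, ncard_singleton]
    simp [h₁]
  · have : {p ∈ ({p₁, p₂} : Set α) | Q p} = {p ∈ ({p₂} : Set α) | Q p} := by
      ext p; constructor
      · rintro ⟨rfl | rfl, hp⟩ <;> tauto
      · rintro ⟨rfl, hp⟩; exact ⟨.inr rfl, hp⟩
    rw [this, odd_ncard_sep_singleton_iff]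
    tauto

end Set

namespace FlipWidth

variable {V : Type*} {G : SimpleGraph V}

theorem not_flips_adj_of_iff {P : Set (Set V × Set V)} {u v : V}
    (h : Odd {p ∈ P | crossPair p u v}.ncard ↔ G.Adj u v) : ¬(flips G P).Adj u v :=
  fun huv => (xor_iff_not_iff _ _).1 huv.2 h

theorem exists_two_flip_of_adj_iff {R : V → V → Prop} (g : V → Prop) (E : Prop)
    (h : ∀ u v, R u v → (G.Adj u v ↔ ((g u ↔ g v) ↔ E))) :
    ∃ X Y : Set V, ∃ P ⊆ ({(X, X), (Y, Y), (X, Y)} : Set (Set V × Set V)),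
      ∀ u v, R u v → ¬(flips G P).Adj u v := by
  by_cases hE : E
  · refine ⟨{v | g v}, {v | ¬g v}, {({v | g v}, {v | g v}), ({v | ¬g v}, {v | ¬g v})},
      by intro p; simp only [Set.mem_insert_iff, Set.mem_singleton_iff]; tauto,
      fun u v huv => not_flips_adj_of_iff ?_⟩
    rw [Set.odd_ncard_sep_pair_iff (by simp only [crossPair, Set.mem_ofPred_eq]; tauto),
      h u v huv]
    simp only [crossPair, Set.mem_ofPred_eq]
    tauto
  · refine ⟨{v | g v}, {v | ¬g v}, {({v | g v}, {v | ¬g v})},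
      Set.singleton_subset_iff.2 (by simp), fun u v huv => not_flips_adj_of_iff ?_⟩
    rw [Set.odd_ncard_sep_singleton_iff, h u v huv]
    simp only [crossPair, Set.mem_ofPred_eq]
    tauto

def AdjIffLabelEq (G : SimpleGraph V) (S T : Set V) (f : V → Prop) : Prop :=
  ∀ a ∈ S, ∀ b ∈ T, G.Adj a b ↔ (f a ↔ f b)

theorem AdjIffLabelEq.symm {S T : Set V} {f : V → Prop} (h : AdjIffLabelEq G S T f) :
    AdjIffLabelEq G T S f :=
  fun b hb a ha => (G.adj_comm b a).trans ((h a ha b hb).trans iff_comm)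

theorem AdjIffLabelEq.mono {S T S' T' : Set V} {f : V → Prop} (h : AdjIffLabelEq G S T f)
    (hS : S' ⊆ S) (hT : T' ⊆ T) : AdjIffLabelEq G S' T' f :=
  fun a ha b hb => h a (hS ha) b (hT hb)

theorem IsBiJoinPartition.adjIffLabelEq {V₁ V₂ W₁ W₂ : Set V}
    (h : IsBiJoinPartition G V₁ V₂ W₁ W₂) (hV : Disjoint V₁ V₂) :
    AdjIffLabelEq G V₁ V₂ (· ∈ W₁ ∪ W₂) := by
  obtain ⟨hW₁, hW₂, hc₁, ha₁, hc₂, ha₂⟩ := h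
  intro a ha b hb
  have ha₂' : a ∉ W₂ := fun h => hV.notMem_of_mem_left ha (hW₂ h)
  have hb₁' : b ∉ W₁ := fun h => hV.notMem_of_mem_right hb (hW₁ h)
  simp only [Set.mem_union, ha₂', hb₁', or_false, false_or]
  by_cases haW : a ∈ W₁ <;> by_cases hbW : b ∈ W₂
  · simpa [haW, hbW] using hc₁ a haW b hbW
  · simpa [haW, hbW] using ha₁ a haW b ⟨hb, hbW⟩
  · simpa [haW, hbW] using ha₂ a ⟨ha, haW⟩ b hbW
  · simpa [haW, hbW] using hc₂ a ⟨ha, haW⟩ b ⟨hb, hbW⟩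

theorem IsBiJoin.exists_adjIffLabelEq {V₁ V₂ : Set V} (h : IsBiJoin G V₁ V₂)
    (hV : Disjoint V₁ V₂) : ∃ f, AdjIffLabelEq G V₁ V₂ f :=
  let ⟨_, _, hW⟩ := h
  ⟨_, IsBiJoinPartition.adjIffLabelEq hW hV⟩

theorem AdjIffLabelEq.exists_iff_const {S T : Set V} {f g : V → Prop}
    (hS : S.Nonempty) (hT : T.Nonempty) (hf : AdjIffLabelEq G S T f)
    (hg : AdjIffLabelEq G S T g) : ∃ c : Prop, ∀ v ∈ S ∪ T, (f v ↔ g v) ↔ c := by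
  obtain ⟨a₀, ha₀⟩ := hS
  obtain ⟨b₀, hb₀⟩ := hT
  have key : ∀ a ∈ S, ∀ b ∈ T, (f a ↔ f b) ↔ (g a ↔ g b) :=
    fun a ha b hb => (hf a ha b hb).symm.trans (hg a ha b hb)
  refine ⟨f b₀ ↔ g b₀, ?_⟩
  rintro v (hv | hv)
  · have := key v hv b₀ hb₀
    tauto
  · have := key a₀ ha₀ v hv
    have := key a₀ ha₀ b₀ hb₀
    tauto

theorem adj_iff_of_labellings {A B C : Set V} {fA fB fC : V → Prop} {cAB cAC cBC : Prop}
    (hfA : AdjIffLabelEq G A (B ∪ C) fA) (hfB : AdjIffLabelEq G B (A ∪ C) fB)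
    (hcAB : ∀ v ∈ A ∪ B, (fA v ↔ fB v) ↔ cAB) (hcAC : ∀ v ∈ A ∪ C, (fA v ↔ fC v) ↔ cAC)
    (hcBC : ∀ v ∈ B ∪ C, (fB v ↔ fC v) ↔ cBC) (u v : V) (huv : crossParts A B C u v) :
    G.Adj u v ↔ (((fA u ↔ (fB u ↔ fC u)) ↔ (fA v ↔ (fB v ↔ fC v))) ↔ (cAB ↔ (cAC ↔ cBC))) := by
  unfold AdjIffLabelEq at hfA hfB
  -- On each part the combined label is that part's own label up to a constant, and for any two
  -- parts these constants combine to `cAB ↔ (cAC ↔ cBC)`.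
  have := G.adj_comm u v
  rcases huv with ⟨hu, hv⟩ | ⟨hu, hv⟩ | ⟨hu, hv⟩ | ⟨hu, hv⟩ | ⟨hu, hv⟩ | ⟨hu, hv⟩ <;> grind

end FlipWidth

open FlipWidth in
theorem triple_of_bijoins_two_flip_general {V : Type*} (G : SimpleGraph V)
    (A B C : Set V) (hA : A.Nonempty) (hB : B.Nonempty) (hC : C.Nonempty)
    (hAB : Disjoint A B) (hAC : Disjoint A C) (hBC : Disjoint B C)
    (h1 : IsBiJoin G A (B ∪ C)) (h2 : IsBiJoin G B (A ∪ C))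
    (h3 : IsBiJoin G C (A ∪ B)) :
    ∃ X Y : Set V, ∃ P ⊆ ({(X, X), (Y, Y), (X, Y)} : Set (Set V × Set V)),
      ∀ u v : V, crossParts A B C u v → ¬ (flips G P).Adj u v := by
  obtain ⟨fA, hfA⟩ := h1.exists_adjIffLabelEq (disjoint_union_right.2 ⟨hAB, hAC⟩)
  obtain ⟨fB, hfB⟩ := h2.exists_adjIffLabelEq (disjoint_union_right.2 ⟨hAB.symm, hBC⟩)
  obtain ⟨fC, hfC⟩ := h3.exists_adjIffLabelEq (disjoint_union_right.2 ⟨hAC.symm, hBC.symm⟩)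
  obtain ⟨cAB, hcAB⟩ := (hfA.mono subset_rfl subset_union_left).exists_iff_const hA hB
    (hfB.symm.mono subset_union_left subset_rfl)
  obtain ⟨cAC, hcAC⟩ := (hfA.mono subset_rfl subset_union_right).exists_iff_const hA hC
    (hfC.symm.mono subset_union_left subset_rfl)
  obtain ⟨cBC, hcBC⟩ := (hfB.mono subset_rfl subset_union_right).exists_iff_const hB hC
    (hfC.symm.mono subset_union_right subset_rfl)
  exact exists_two_flip_of_adj_iff _ _ (adj_iff_of_labellings hfA hfB hcAB hcAC hcBC)

open FlipWidth in
/-- For a triple of bi-joins `(A, B, C)` of `G`, there is a `2`-flip of `G`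
with no edges incident to two distinct sets among `A`, `B`, `C`. -/
theorem triple_of_bijoins_two_flip {V : Type*} (G : SimpleGraph V)
    (A B C : Set V) (hA : A.Nonempty) (hB : B.Nonempty) (hC : C.Nonempty)
    (hAB : Disjoint A B) (hAC : Disjoint A C) (hBC : Disjoint B C)
    (hunion : A ∪ B ∪ C = Set.univ)
    (h1 : IsBiJoin G A (B ∪ C)) (h2 : IsBiJoin G B (A ∪ C))
    (h3 : IsBiJoin G C (A ∪ B)) :
    ∃ X Y : Set V, ∃ P ⊆ ({(X, X), (Y, Y), (X, Y)} : Set (Set V × Set V)),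
      ∀ u v : V, crossParts A B C u v → ¬ (flips G P).Adj u v :=
  triple_of_bijoins_two_flip_general G A B C hA hB hC hAB hAC hBC h1 h2 h3
end

section
/- Let G be a graph with a triple of bi-joins (A,B,C) with bi-join partitions (A1, A2, B1, B2) of (A,B), (A1, A2, C1, C2) of (A,C), and (B1, B2, C2, C1) of (B,C). Then setting X = A1 ∪ B2 ∪ C2 and Y = A2 ∪ B1 ∪ C1, the graph G ⊕ (X,Y) has no edges between distinct sets among A, B, C. -/
open SimpleGraph Set

/-! The sets `X` and `Y` are disjoint, and in each of the three bi-joins the two complete pairs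
join `X` to `Y` while the two anti-complete pairs lie inside `X` or inside `Y`. So the flip
toggles exactly the edges between distinct parts. -/

namespace FlipWidth

variable {V : Type*} {G H : SimpleGraph V} {X Y S S₁ S₂ T T₁ T₂ : Set V} {u v : V}

theorem flip_comm (G : SimpleGraph V) (X Y : Set V) : flip G X Y = flip G Y X := by
  ext u v
  simp only [flip]
  rw [or_comm]

theorem flip_adj_iff_not_adj_of_mem (hu : u ∈ X) (hv : v ∈ Y) :
    (flip G X Y).Adj u v ↔ u ≠ v ∧ ¬ G.Adj u v := by
  change u ≠ v ∧ Xor ((u ∈ X ∧ v ∈ Y) ∨ (u ∈ Y ∧ v ∈ X)) (G.Adj u v) ↔ _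
  simp only [hu, hv, and_self, true_or, xor_true]

theorem flip_adj_iff_adj_of_mem_left (hXY : Disjoint X Y) (hu : u ∈ X) (hv : v ∈ X) :
    (flip G X Y).Adj u v ↔ G.Adj u v := by
  have hu' : u ∉ Y := hXY.notMem_of_mem_left hu
  have hv' : v ∉ Y := hXY.notMem_of_mem_left hv
  change u ≠ v ∧ Xor ((u ∈ X ∧ v ∈ Y) ∨ (u ∈ Y ∧ v ∈ X)) (G.Adj u v) ↔ _
  simp only [hu', hv', and_false, false_and, or_self, xor_false, id]
  exact and_iff_right_of_imp G.ne_of_adj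

theorem Anticomplete.symm (h : Anticomplete H S T) : Anticomplete H T S :=
  fun a ha b hb hab => h b hb a ha hab.symm

theorem Anticomplete.union_left (h₁ : Anticomplete H S₁ T) (h₂ : Anticomplete H S₂ T) :
    Anticomplete H (S₁ ∪ S₂) T :=
  fun a ha b hb => ha.elim (h₁ a · b hb) (h₂ a · b hb)

theorem Anticomplete.union_right (h₁ : Anticomplete H S T₁) (h₂ : Anticomplete H S T₂) :
    Anticomplete H S (T₁ ∪ T₂) :=
  (h₁.symm.union_left h₂.symm).symm

theorem Complete.anticomplete_flip (h : Complete G S T) (hS : S ⊆ X) (hT : T ⊆ Y) :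
    Anticomplete (flip G X Y) S T :=
  fun a ha b hb hab => ((flip_adj_iff_not_adj_of_mem (hS ha) (hT hb)).mp hab).2 (h a ha b hb)

theorem Anticomplete.anticomplete_flip (hXY : Disjoint X Y) (h : Anticomplete G S T)
    (hS : S ⊆ X) (hT : T ⊆ X) : Anticomplete (flip G X Y) S T :=
  fun a ha b hb hab => h a ha b hb ((flip_adj_iff_adj_of_mem_left hXY (hS ha) (hT hb)).mp hab)

theorem anticomplete_flip_of_biJoin (hXY : Disjoint X Y)
    (hS₁ : S₁ ⊆ X) (hS₂ : S₂ ⊆ Y) (hT₁ : T₁ ⊆ Y) (hT₂ : T₂ ⊆ X)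
    (h₁₁ : Complete G S₁ T₁) (h₁₂ : Anticomplete G S₁ T₂)
    (h₂₂ : Complete G S₂ T₂) (h₂₁ : Anticomplete G S₂ T₁) :
    Anticomplete (flip G X Y) (S₁ ∪ S₂) (T₁ ∪ T₂) := by
  refine Anticomplete.union_left (.union_right ?_ ?_) (.union_right ?_ ?_)
  · exact h₁₁.anticomplete_flip hS₁ hT₁
  · exact h₁₂.anticomplete_flip hXY hS₁ hT₂
  · rw [flip_comm]; exact h₂₁.anticomplete_flip hXY.symm hS₂ hT₁
  · rw [flip_comm]; exact h₂₂.anticomplete_flip hS₂ hT₂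

theorem not_adj_of_crossParts {A B C : Set V} (hAB : Anticomplete H A B)
    (hAC : Anticomplete H A C) (hBC : Anticomplete H B C) (h : crossParts A B C u v) :
    ¬ H.Adj u v := by
  rcases h with ⟨hu, hv⟩ | ⟨hu, hv⟩ | ⟨hu, hv⟩ | ⟨hu, hv⟩ | ⟨hu, hv⟩ | ⟨hu, hv⟩
  exacts [hAB u hu v hv, hAB.symm u hu v hv, hAC u hu v hv, hAC.symm u hu v hv,
    hBC u hu v hv, hBC.symm u hu v hv]

end FlipWidth

open FlipWidth in
theorem triple_of_bijoins_case2_general {V : Type*} (G : SimpleGraph V)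
    (A B C A1 A2 B1 B2 C1 C2 : Set V)
    (hAB : Disjoint A B) (hAC : Disjoint A C) (hBC : Disjoint B C)
    (hA12 : A1 ∪ A2 = A) (hA12d : Disjoint A1 A2)
    (hB12 : B1 ∪ B2 = B) (hB12d : Disjoint B1 B2)
    (hC12 : C1 ∪ C2 = C) (hC12d : Disjoint C1 C2)
    (hab1 : Complete G A1 B1) (hab2 : Anticomplete G A1 B2)
    (hab3 : Complete G A2 B2) (hab4 : Anticomplete G A2 B1)
    (hac1 : Complete G A1 C1) (hac2 : Anticomplete G A1 C2)
    (hac3 : Complete G A2 C2) (hac4 : Anticomplete G A2 C1)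
    (hbc1 : Complete G B1 C2) (hbc2 : Anticomplete G B1 C1)
    (hbc3 : Complete G B2 C1) (hbc4 : Anticomplete G B2 C2) :
    ∀ u v : V, crossParts A B C u v →
      ¬ (flip G (A1 ∪ B2 ∪ C2) (A2 ∪ B1 ∪ C1)).Adj u v := by
  subst hA12 hB12 hC12
  have hXY : Disjoint (A1 ∪ B2 ∪ C2) (A2 ∪ B1 ∪ C1) := by
    simp only [disjoint_union_left, disjoint_union_right] at hAB hAC hBC ⊢
    exact ⟨⟨⟨⟨hA12d, hAB.2.2.symm⟩, hAC.2.2.symm⟩, ⟨⟨hAB.1.1, hB12d.symm⟩, hBC.2.1.symm⟩⟩,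
      ⟨⟨hAC.1.1, hBC.1.2⟩, hC12d.symm⟩⟩
  have hX : A1 ⊆ A1 ∪ B2 ∪ C2 ∧ B2 ⊆ A1 ∪ B2 ∪ C2 ∧ C2 ⊆ A1 ∪ B2 ∪ C2 := by
    refine ⟨?_, ?_, ?_⟩ <;> intro x hx <;> simp [hx]
  have hY : A2 ⊆ A2 ∪ B1 ∪ C1 ∧ B1 ⊆ A2 ∪ B1 ∪ C1 ∧ C1 ⊆ A2 ∪ B1 ∪ C1 := by
    refine ⟨?_, ?_, ?_⟩ <;> intro x hx <;> simp [hx]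
  intro u v
  refine not_adj_of_crossParts ?_ ?_ ?_
  · exact anticomplete_flip_of_biJoin hXY hX.1 hY.1 hY.2.1 hX.2.1 hab1 hab2 hab3 hab4
  · exact anticomplete_flip_of_biJoin hXY hX.1 hY.1 hY.2.2 hX.2.2 hac1 hac2 hac3 hac4
  · rw [union_comm B1]
    exact anticomplete_flip_of_biJoin hXY hX.2.1 hY.2.1 hY.2.2 hX.2.2 hbc3 hbc4 hbc1 hbc2

open FlipWidth in
/-- Case 2 of Lemma 4.1: if `(A,B,C)` is a triple of bi-joins with bi-join
partitions `(A1,A2,B1,B2)` of `(A,B)`, `(A1,A2,C1,C2)` of `(A,C)` and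
`(B1,B2,C2,C1)` of `(B,C)`, then flipping `(X,Y)` for `X = A1 ∪ B2 ∪ C2`,
`Y = A2 ∪ B1 ∪ C1` removes all cross edges. -/
theorem triple_of_bijoins_case2 {V : Type*} (G : SimpleGraph V)
    (A B C A1 A2 B1 B2 C1 C2 : Set V)
    (hA : A.Nonempty) (hB : B.Nonempty) (hC : C.Nonempty)
    (hAB : Disjoint A B) (hAC : Disjoint A C) (hBC : Disjoint B C)
    (hunion : A ∪ B ∪ C = Set.univ)
    (hA12 : A1 ∪ A2 = A) (hA12d : Disjoint A1 A2)
    (hB12 : B1 ∪ B2 = B) (hB12d : Disjoint B1 B2)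
    (hC12 : C1 ∪ C2 = C) (hC12d : Disjoint C1 C2)
    (hab1 : Complete G A1 B1) (hab2 : Anticomplete G A1 B2)
    (hab3 : Complete G A2 B2) (hab4 : Anticomplete G A2 B1)
    (hac1 : Complete G A1 C1) (hac2 : Anticomplete G A1 C2)
    (hac3 : Complete G A2 C2) (hac4 : Anticomplete G A2 C1)
    (hbc1 : Complete G B1 C2) (hbc2 : Anticomplete G B1 C1)
    (hbc3 : Complete G B2 C1) (hbc4 : Anticomplete G B2 C2) :
    ∀ u v : V, crossParts A B C u v →
      ¬ (flip G (A1 ∪ B2 ∪ C2) (A2 ∪ B1 ∪ C1)).Adj u v :=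
  triple_of_bijoins_case2_general G A B C A1 A2 B1 B2 C1 C2 hAB hAC hBC hA12 hA12d hB12 hB12d hC12
    hC12d hab1 hab2 hab3 hab4 hac1 hac2 hac3 hac4 hbc1 hbc2 hbc3 hbc4
end
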